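/- Fix positive integers k, T, T', U and reals ε, δ, α ≥ 0, β ∈ [0,1]. If there exists an (ε,δ)-DP algorithm (under item-level neighbors) for time-window freq≥k in the bundle setting on datasets with time horizon ⌈T/T'⌉ over universe [U] having (α,β)-utility, then there exists an (ε,δ)-DP algorithm (under item-level neighbors) for time-window freq≥k in the singleton setting on datasets with time horizon T over universe [U] having (α + T', β)-utility. -/

import Mathlib

open Finset

/-- `(ε, δ)`-differential privacy of a randomized algorithm `M`
with respect to the neighboring relation `neighbor`. -/
def IsDP {I O : Type} (neighbor : I → I → Prop) (M : I → PMF O) (ε δ : ℝ) : Prop :=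
  ∀ D D', neighbor D D' → ∀ s : Set O,
    (M D).toOuterMeasure s ≤
      ENNReal.ofReal (Real.exp ε) * (M D').toOuterMeasure s + ENNReal.ofReal δ

/-- `(α, β)`-utility: for every input and every query, with probability at least
`1 - β` the output estimate is within `α` of the true value. -/
def HasUtility {I Q : Type} (M : I → PMF (Q → ℝ)) (val : I → Q → ℝ) (α β : ℝ) : Prop :=
  ∀ D q, ENNReal.ofReal (1 - β) ≤ (M D).toOuterMeasure {o | |o q - val D q| ≤ α}

/-- A dataset with time horizon `T` over universe `[U]`:
`S t u` is the multiplicity of item `u` at (0-indexed) time step `t`. -/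
abbrev Dataset (T U : ℕ) : Type := Fin T → Fin U → ℕ

/-- `S^{[t₁, t₂]}_u` with 1-indexed times: total multiplicity of item `u`
during time steps `t₁, ..., t₂`. -/
def winCount {T U : ℕ} (S : Dataset T U) (t₁ t₂ : ℕ) (u : Fin U) : ℕ :=
  ∑ t : Fin T, if t₁ ≤ (t : ℕ) + 1 ∧ (t : ℕ) + 1 ≤ t₂ then S t u else 0

/-- `freq≥k(S^{[t₁,t₂]})`: the number of items occurring at least `k` times. -/
def freqGe {T U : ℕ} (k : ℕ) (S : Dataset T U) (t₁ t₂ : ℕ) : ℕ :=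
  (Finset.univ.filter fun u : Fin U => k ≤ winCount S t₁ t₂ u).card

/-- `freq=k(S^{[t₁,t₂]})`: the number of items occurring exactly `k` times. -/
def freqEq {T U : ℕ} (k : ℕ) (S : Dataset T U) (t₁ t₂ : ℕ) : ℕ :=
  (Finset.univ.filter fun u : Fin U => winCount S t₁ t₂ u = k).card

/-- Item-level neighbors: the datasets agree on all items except possibly one. -/
def ItemNeighbor {T U : ℕ} (S S' : Dataset T U) : Prop :=
  ∃ u : Fin U, ∀ u' : Fin U, u' ≠ u → ∀ t : Fin T, S t u' = S' t u'

/-- Event-level neighbors: the total (absolute) difference of multiplicities is at most 1. -/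
def EventNeighbor {T U : ℕ} (S S' : Dataset T U) : Prop :=
  (∑ t : Fin T, ∑ u : Fin U, ((S t u : ℤ) - (S' t u : ℤ)).natAbs) ≤ 1

/-- Singleton setting: at most one item arrives at each time step. -/
def IsSingleton {T U : ℕ} (S : Dataset T U) : Prop :=
  ∀ t : Fin T, (∑ u : Fin U, S t u) ≤ 1

/-- Cumulative `freq≥k` queries: the query indexed by `t : Fin T` is
`freq≥k(S^{[1, t+1]})`. -/
def cumVal (k : ℕ) {T U : ℕ} (S : Dataset T U) (t : Fin T) : ℝ :=
  (freqGe k S 1 ((t : ℕ) + 1) : ℝ)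

/-- Time-window `freq≥k` queries: the query indexed by a pair `t₁ ≤ t₂` (0-indexed)
is `freq≥k(S^{[t₁+1, t₂+1]})`. -/
def twVal (k : ℕ) {T U : ℕ} (S : Dataset T U)
    (p : {p : Fin T × Fin T // p.1 ≤ p.2}) : ℝ :=
  (freqGe k S ((p.1.1 : ℕ) + 1) ((p.1.2 : ℕ) + 1) : ℝ)

/-- Time-window `freq=k` queries. -/
def twValEq (k : ℕ) {T U : ℕ} (S : Dataset T U)
    (p : {p : Fin T × Fin T // p.1 ≤ p.2}) : ℝ :=
  (freqEq k S ((p.1.1 : ℕ) + 1) ((p.1.2 : ℕ) + 1) : ℝ)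

/-- Fixed-window `freq≥k` queries with window `W`: the query indexed by
`i : Fin (T - W + 1)` is `freq≥k(S^{[i+1, i+W]})`. -/
def fwVal (k W : ℕ) {T U : ℕ} (S : Dataset T U) (i : Fin (T - W + 1)) : ℝ :=
  (freqGe k S ((i : ℕ) + 1) ((i : ℕ) + W) : ℝ)

/-- Neighboring inputs for range-query-type problems: they differ by adding
or removing a single point. -/
def AddRemoveNeighbor {P : Type} (D D' : Multiset P) : Prop :=
  ∃ x : P, D' = x ::ₘ D ∨ D = x ::ₘ D'

/-- 1d-range queries over a linearly ordered finite domain `Fin M`: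
the query indexed by `y₁ ≤ y₂` counts the points in `[y₁, y₂]`. -/
def range1Val {M : ℕ} (D : Multiset (Fin M))
    (p : {p : Fin M × Fin M // p.1 ≤ p.2}) : ℝ :=
  ((D.filter fun x => p.1.1 ≤ x ∧ x ≤ p.1.2).card : ℝ)

/-- 2d-range queries over the domain `Fin M × Fin M`: the query indexed by a pair
`(y¹, y²)` counts the points `x` with `y¹ ⪯ x ⪯ y²` coordinatewise. -/
def range2Val {M : ℕ} (D : Multiset (Fin M × Fin M))
    (p : (Fin M × Fin M) × (Fin M × Fin M)) : ℝ :=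
  ((D.filter fun x =>
      p.1.1 ≤ x.1 ∧ p.1.2 ≤ x.2 ∧ x.1 ≤ p.2.1 ∧ x.2 ≤ p.2.2).card : ℝ)

/-- Neighboring inputs for the linear query problem: they differ
in a single coordinate. -/
def CoordNeighbor {m : ℕ} (x x' : Fin m → Bool) : Prop :=
  ∃ u : Fin m, ∀ u' : Fin m, u' ≠ u → x u' = x' u'

/-- The `A`-linear queries: the query indexed by `i : Fin d` is `(A x)_i`. -/
def linVal {d m : ℕ} (A : Fin d → Fin m → Bool) (x : Fin m → Bool) (i : Fin d) : ℝ :=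
  ((∑ u : Fin m, if A i u && x u then 1 else 0 : ℕ) : ℝ)

/-- The 1-way marginal queries: the query indexed by `i : Fin d` is the `i`-th
coordinate of the sum of the input vectors. -/
def margVal {d : ℕ} (D : Multiset (Fin d → Bool)) (i : Fin d) : ℝ :=
  (((D.map fun x => if x i then (1 : ℕ) else 0).sum : ℕ) : ℝ)

/-! Group the time steps into consecutive blocks of length `T'` and give the bundle algorithm
the dataset whose `s`-th step collects all arrivals of the `s`-th block. Item-level neighbours
stay neighbours, so privacy survives this preprocessing and the post-processing below. The window
`[t₁, t₂]` is answered by the bundle answer on the blocks from the one containing `t₁` to the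
last one ending inside the window. That block window differs from `[t₁, t₂]` only inside the
block of `t₁` and inside the block right after the last one, each of which carries at most `T'`
arrivals in the singleton setting; an item changes its `freq≥k` status between the two windows
only through an arrival in the difference, so the two counts differ by at most `T'`. -/

section Reduction

variable {I J Q Q' : Type}

theorem IsDP.map_comp {r : J → J → Prop} {r' : I → I → Prop} {M : J → PMF (Q → ℝ)}
    {ε δ : ℝ} (hM : IsDP r M ε δ) (f : I → J) (hf : ∀ D D', r' D D' → r (f D) (f D'))
    (g : (Q → ℝ) → (Q' → ℝ)) : IsDP r' (fun D => (M (f D)).map g) ε δ := by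
  intro D D' hD s
  simp only [PMF.toOuterMeasure_map_apply]
  exact hM _ _ (hf D D' hD) _

theorem HasUtility.map_comp {M : J → PMF (Q → ℝ)} {val : J → Q → ℝ} {val' : I → Q' → ℝ}
    {α β c : ℝ} (hM : HasUtility M val α β) (f : I → J) (φ : Q' → Q)
    (hφ : ∀ D q, |val (f D) (φ q) - val' D q| ≤ c) :
    HasUtility (fun D => (M (f D)).map fun o q => o (φ q)) val' (α + c) β := by
  intro D q
  rw [PMF.toOuterMeasure_map_apply]
  refine (hM (f D) (φ q)).trans ((M (f D)).toOuterMeasure.mono fun o ho => ?_)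
  have := abs_sub_le (o (φ q)) (val (f D) (φ q)) (val' D q)
  simp only [Set.mem_preimage, Set.mem_ofPred_eq] at ho ⊢
  linarith [hφ D q]

end Reduction

section WindowFrequency

variable {τ σ ι : Type} [Fintype ι]

def freqGeOn (k : ℕ) (S : τ → ι → ℕ) (W : Finset τ) : ℕ :=
  #{u | k ≤ ∑ t ∈ W, S t u}

theorem freqGeOn_le_add_sum_sdiff [DecidableEq τ] (k : ℕ) (S : τ → ι → ℕ) (A B : Finset τ) :
    freqGeOn k S B ≤ freqGeOn k S A + ∑ t ∈ B \ A, ∑ u, S t u := by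
  have hocc : ∀ u, ∑ t ∈ B, S t u ≤ ∑ t ∈ A, S t u + ∑ t ∈ B \ A, S t u := fun u => by
    rw [← sum_union disjoint_sdiff, union_sdiff_self_eq_union]
    exact sum_le_sum_of_subset subset_union_right
  have hgain : #{u | k ≤ ∑ t ∈ B, S t u ∧ ¬ k ≤ ∑ t ∈ A, S t u} ≤ ∑ u, ∑ t ∈ B \ A, S t u := by
    rw [card_eq_sum_ones]
    refine (sum_le_sum fun u hu => ?_).trans (sum_le_sum_of_subset (filter_subset _ _))
    have := hocc u
    simp only [mem_filter] at hu
    omega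
  rw [sum_comm] at hgain
  calc freqGeOn k S B
      = #{u ∈ {u | k ≤ ∑ t ∈ B, S t u} | k ≤ ∑ t ∈ A, S t u}
          + #{u ∈ {u | k ≤ ∑ t ∈ B, S t u} | ¬ k ≤ ∑ t ∈ A, S t u} :=
        (card_filter_add_card_filter_not _).symm
    _ ≤ freqGeOn k S A + ∑ t ∈ B \ A, ∑ u, S t u := by
        simp only [filter_filter]
        exact add_le_add (card_le_card fun u hu => by simp_all) hgain

theorem sum_sum_le_card_of_forall_le_one (S : τ → ι → ℕ) (hS : ∀ t, ∑ u, S t u ≤ 1)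
    (W : Finset τ) : ∑ t ∈ W, ∑ u, S t u ≤ #W := by
  simpa using sum_le_card_nsmul W _ 1 fun t _ => hS t

theorem abs_freqGeOn_sub_le [DecidableEq τ] (k : ℕ) (S : τ → ι → ℕ) (hS : ∀ t, ∑ u, S t u ≤ 1)
    {A B : Finset τ} {c : ℕ} (hAB : #(A \ B) ≤ c) (hBA : #(B \ A) ≤ c) :
    |(freqGeOn k S A : ℝ) - freqGeOn k S B| ≤ c := by
  have h₁ := freqGeOn_le_add_sum_sdiff k S A B
  have h₂ := freqGeOn_le_add_sum_sdiff k S B A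
  have h₁' := sum_sum_le_card_of_forall_le_one S hS (B \ A)
  have h₂' := sum_sum_le_card_of_forall_le_one S hS (A \ B)
  rw [abs_sub_le_iff, sub_le_iff_le_add, sub_le_iff_le_add]
  constructor <;> norm_cast <;> omega

def pushTime [Fintype τ] [DecidableEq σ] (π : τ → σ) (S : τ → ι → ℕ) : σ → ι → ℕ :=
  fun s u => ∑ t with π t = s, S t u

theorem freqGeOn_pushTime [Fintype τ] [DecidableEq σ] (k : ℕ) (π : τ → σ) (S : τ → ι → ℕ)
    (W : Finset σ) : freqGeOn k (pushTime π S) W = freqGeOn k S {t | π t ∈ W} := by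
  unfold freqGeOn pushTime
  congr! 4 with u
  exact sum_fiberwise_eq_sum_filter _ _ _ _

end WindowFrequency

theorem ItemNeighbor.pushTime {T T₁ U : ℕ} (π : Fin T → Fin T₁) {S S' : Dataset T U}
    (h : ItemNeighbor S S') : ItemNeighbor (pushTime π S) (pushTime π S') := by
  obtain ⟨u, hu⟩ := h
  exact ⟨u, fun u' hu' s => sum_congr rfl fun t _ => hu u' hu' t⟩

theorem winCount_eq_sum_Icc {T U : ℕ} (S : Dataset T U) (t₁ t₂ : Fin T) (u : Fin U) :
    winCount S (t₁ + 1) (t₂ + 1) u = ∑ t ∈ Icc t₁ t₂, S t u := by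
  rw [winCount, ← sum_filter]
  congr 1
  ext t
  simp only [mem_filter, mem_univ, true_and, mem_Icc, Fin.le_iff_val_le_val]
  omega

theorem twVal_eq_freqGeOn {T U : ℕ} (k : ℕ) (S : Dataset T U)
    (p : {p : Fin T × Fin T // p.1 ≤ p.2}) :
    twVal k S p = freqGeOn k S (Icc p.1.1 p.1.2) := by
  simp only [twVal, freqGe, freqGeOn, winCount_eq_sum_Icc]

section Blocks

variable {T T' : ℕ}

theorem card_filter_div_eq_le (hT' : 0 < T') (b : ℕ) : #{t : Fin T | (t : ℕ) / T' = b} ≤ T' := by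
  calc #{t : Fin T | (t : ℕ) / T' = b} ≤ #(range T') := by
        refine card_le_card_of_injOn (fun t => (t : ℕ) % T')
          (fun t _ => mem_range.2 (Nat.mod_lt _ hT')) fun t ht s hs hts => Fin.ext ?_
        simp only [coe_filter, mem_univ, true_and, Set.mem_ofPred_eq] at ht hs
        rw [← Nat.div_add_mod t T', ← Nat.div_add_mod s T', ht, hs]
        exact congrArg _ hts
    _ = T' := card_range T'

theorem div_lt_ceilDiv (hT' : 0 < T') (t : Fin T) : (t : ℕ) / T' < (T + T' - 1) / T' := by
  rw [← Nat.add_one_le_iff, Nat.le_div_iff_mul_le hT', add_one_mul]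
  have := Nat.div_mul_le_self t T'
  omega

def toBlock (hT' : 0 < T') (t : Fin T) : Fin ((T + T' - 1) / T') :=
  ⟨t / T', div_lt_ceilDiv hT' t⟩

-- The last block ending inside `[t₁, t₂]`, or the block of `t₁` if there is none.
def lastBlock (hT' : 0 < T') (t₁ t₂ : Fin T) : Fin ((T + T' - 1) / T') :=
  ⟨max (t₁ / T') ((t₂ + 1) / T' - 1), by
    have h₁ := div_lt_ceilDiv hT' t₁
    have h₂ : ((t₂ : ℕ) + 1) / T' ≤ (T + T' - 1) / T' :=
      Nat.div_le_div_right (by have := t₂.2; omega)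
    exact max_lt h₁ (by have := (Nat.zero_le _).trans_lt h₁; omega)⟩

def blockQuery (hT' : 0 < T') (p : {p : Fin T × Fin T // p.1 ≤ p.2}) :
    {q : Fin ((T + T' - 1) / T') × Fin ((T + T' - 1) / T') // q.1 ≤ q.2} :=
  ⟨(toBlock hT' p.1.1, lastBlock hT' p.1.1 p.1.2), Fin.le_iff_val_le_val.2 (le_max_left _ _)⟩

def blockWindow (hT' : 0 < T') (p : {p : Fin T × Fin T // p.1 ≤ p.2}) : Finset (Fin T) :=
  {t | toBlock hT' t ∈ Icc (blockQuery hT' p).1.1 (blockQuery hT' p).1.2}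

theorem mem_blockWindow (hT' : 0 < T') (p : {p : Fin T × Fin T // p.1 ≤ p.2}) (t : Fin T) :
    t ∈ blockWindow hT' p ↔
      (p.1.1 : ℕ) / T' ≤ t / T' ∧ (t : ℕ) / T' ≤ max (p.1.1 / T') ((p.1.2 + 1) / T' - 1) := by
  simp [blockWindow, toBlock, blockQuery, lastBlock, Fin.le_iff_val_le_val]

theorem Icc_sdiff_blockWindow_subset (hT' : 0 < T') (p : {p : Fin T × Fin T // p.1 ≤ p.2}) :
    Icc p.1.1 p.1.2 \ blockWindow hT' p
      ⊆ ({t | (t : ℕ) / T' = ((p.1.2 : ℕ) + 1) / T'} : Finset (Fin T)) := by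
  intro t
  simp only [mem_sdiff, mem_Icc, mem_blockWindow, mem_filter, mem_univ, true_and,
    Fin.le_iff_val_le_val]
  rintro ⟨⟨h₁, h₂⟩, hB⟩
  have := Nat.div_le_div_right (c := T') h₁
  have := Nat.div_le_div_right (c := T') (h₂.trans (Nat.le_add_right _ 1))
  omega

theorem blockWindow_sdiff_Icc_subset (hT' : 0 < T') (p : {p : Fin T × Fin T // p.1 ≤ p.2}) :
    blockWindow hT' p \ Icc p.1.1 p.1.2
      ⊆ ({t | (t : ℕ) / T' = (p.1.1 : ℕ) / T'} : Finset (Fin T)) := by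
  intro t
  simp only [mem_sdiff, mem_Icc, mem_blockWindow, mem_filter, mem_univ, true_and,
    Fin.le_iff_val_le_val]
  rintro ⟨hB, hA⟩
  have : (t : ℕ) < p.1.1 → (t : ℕ) / T' ≤ (p.1.1 : ℕ) / T' := fun h => Nat.div_le_div_right h.le
  have : (p.1.2 : ℕ) < t → ((p.1.2 : ℕ) + 1) / T' ≤ (t : ℕ) / T' := Nat.div_le_div_right
  have := Nat.zero_le ((p.1.1 : ℕ) / T')
  omega

theorem abs_twVal_pushTime_blockQuery_sub_le {U : ℕ} (k : ℕ) (hT' : 0 < T') {S : Dataset T U}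
    (hS : IsSingleton S) (p : {p : Fin T × Fin T // p.1 ≤ p.2}) :
    |twVal k (pushTime (toBlock hT') S) (blockQuery hT' p) - twVal k S p| ≤ T' := by
  rw [twVal_eq_freqGeOn, twVal_eq_freqGeOn, freqGeOn_pushTime, abs_sub_comm]
  exact abs_freqGeOn_sub_le k S hS
    ((card_le_card (Icc_sdiff_blockWindow_subset hT' p)).trans (card_filter_div_eq_le hT' _))
    ((card_le_card (blockWindow_sdiff_Icc_subset hT' p)).trans (card_filter_div_eq_le hT' _))

end Blocks

theorem time_window_singleton_from_bundle_general (k T T' U : ℕ)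
    (hT' : 0 < T')
    (ε δ α β : ℝ)
    (h : ∃ M₁ : Dataset ((T + T' - 1) / T') U →
        PMF ({p : Fin ((T + T' - 1) / T') × Fin ((T + T' - 1) / T') // p.1 ≤ p.2} → ℝ),
      IsDP ItemNeighbor M₁ ε δ ∧ HasUtility M₁ (twVal k) α β) :
    ∃ M₂ : {S : Dataset T U // IsSingleton S} →
        PMF ({p : Fin T × Fin T // p.1 ≤ p.2} → ℝ),
      IsDP (fun S S' => ItemNeighbor S.1 S'.1) M₂ ε δ ∧
      HasUtility M₂ (fun S => twVal k S.1) (α + (T' : ℝ)) β := by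
  obtain ⟨M₁, hDP, hUtil⟩ := h
  let compress (S : {S : Dataset T U // IsSingleton S}) := pushTime (toBlock hT') S.1
  refine ⟨fun S => (M₁ (compress S)).map fun o p => o (blockQuery hT' p), ?_, ?_⟩
  · exact hDP.map_comp compress (fun S S' hS => hS.pushTime _) _
  · exact hUtil.map_comp compress (blockQuery hT') fun S p =>
      abs_twVal_pushTime_blockQuery_sub_le k hT' S.2 p

/-- time compression: an `(ε, δ)`-DP item-level algorithm for
time-window `freq≥k` in the bundle setting on horizon `⌈T/T'⌉` yields an
`(ε, δ)`-DP item-level algorithm for time-window `freq≥k` in the singleton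
setting on horizon `T` with `(α + T', β)`-utility. -/
theorem time_window_singleton_from_bundle (k T T' U : ℕ)
    (hk : 0 < k) (hT : 0 < T) (hT' : 0 < T') (hU : 0 < U)
    (ε δ α β : ℝ) (hε : 0 ≤ ε) (hδ : 0 ≤ δ) (hα : 0 ≤ α) (hβ0 : 0 ≤ β) (hβ1 : β ≤ 1)
    (h : ∃ M₁ : Dataset ((T + T' - 1) / T') U →
        PMF ({p : Fin ((T + T' - 1) / T') × Fin ((T + T' - 1) / T') // p.1 ≤ p.2} → ℝ),
      IsDP ItemNeighbor M₁ ε δ ∧ HasUtility M₁ (twVal k) α β) :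
    ∃ M₂ : {S : Dataset T U // IsSingleton S} →
        PMF ({p : Fin T × Fin T // p.1 ≤ p.2} → ℝ),
      IsDP (fun S S' => ItemNeighbor S.1 S'.1) M₂ ε δ ∧
      HasUtility M₂ (fun S => twVal k S.1) (α + (T' : ℝ)) β :=
  time_window_singleton_from_bundle_general k T T' U hT' ε δ α β h
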